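/- arXiv:1402.5480 — 3 statements merged into one kernel-verified Lean document; each statement's English description precedes it below -/
import Mathlib

section
/- Let M ∈ ℂ^{p×p} and B ∈ ℂ^{q×q} be Hermitian positive definite, E ∈ ℂ^{p×q}, and ω₁, ω₂ scalars. Consider A = [[M, E], [-Eᴴ, 0]] and the preconditioner B(ω₁,ω₂) = [[M, 0], [-ω₁Eᴴ, B]] · diag(M⁻¹, B⁻¹) · [[M, ω₂E], [0, B]]. Then null((B(ω₁,ω₂)⁻¹ A)²) = null(B(ω₁,ω₂)⁻¹ A), i.e., index(I - G) = 1 for the iteration matrix G = I - τ B(ω₁,ω₂)⁻¹ A with τ ≠ 0. -/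
open Matrix
open scoped ComplexOrder

/-!
Write `N = Bw⁻¹ A`; `null N² = null N` amounts to: `A y = 0` and `Bw y = A x` force `y = 0`.
As `M` is positive definite, `A y = 0` forces `y = (0, v)` with `E v = 0`. Such a `y` is killed
by both `K_L` and `K_U`, so `Bw y = Bc y`, and then `vᴴ B v = yᴴ Bc y = yᴴ A x = (Aᴴ y)ᴴ x = 0`,
whence `v = 0` as `B` is positive definite.
-/

namespace Matrix

variable {m n R : Type*} [Fintype m] [Fintype n] [CommRing R]

theorem setOf_mulVec_nonsing_inv_mul_sq_eq_zero_eq [DecidableEq n] {P A : Matrix n n R}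
    (hP : IsUnit P.det) (h : ∀ x y, A *ᵥ y = 0 → P *ᵥ y = A *ᵥ x → y = 0) :
    {x | (P⁻¹ * A * (P⁻¹ * A)) *ᵥ x = 0} = {x | (P⁻¹ * A) *ᵥ x = 0} := by
  have hPA (z : n → R) : P *ᵥ (P⁻¹ * A) *ᵥ z = A *ᵥ z := by
    rw [mulVec_mulVec, ← Matrix.mul_assoc, mul_nonsing_inv _ hP, Matrix.one_mul]
  ext x
  rw [Set.mem_ofPred_eq, Set.mem_ofPred_eq, ← mulVec_mulVec]
  refine ⟨fun hx ↦ h x _ ?_ (hPA x), fun hx ↦ by rw [hx, mulVec_zero]⟩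
  rw [← hPA, hx, mulVec_zero]

theorem mul_nonsing_inv_mul_mulVec_eq [DecidableEq n] {C L U : Matrix n n R} (hC : IsUnit C.det)
    {y : n → R} (hL : L *ᵥ y = 0) (hU : U *ᵥ y = 0) :
    ((C + L) * C⁻¹ * (C + U)) *ᵥ y = C *ᵥ y := by
  rw [← mulVec_mulVec, add_mulVec, hU, add_zero, ← mulVec_mulVec, mulVec_mulVec (M := C⁻¹),
    nonsing_inv_mul _ hC, one_mulVec, add_mulVec, hL, add_zero]

theorem isUnit_det_saddle_preconditioner [StarRing R] [DecidableEq m] [DecidableEq n]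
    {M : Matrix m m R} {B : Matrix n n R} (hM : IsUnit M.det) (hB : IsUnit B.det)
    (E : Matrix m n R) (ω₁ ω₂ : R) :
    IsUnit ((fromBlocks M 0 0 B + ω₁ • fromBlocks 0 0 (-Eᴴ) 0) * (fromBlocks M 0 0 B)⁻¹ *
      (fromBlocks M 0 0 B + ω₂ • fromBlocks 0 E 0 0)).det := by
  have hL : fromBlocks M 0 0 B + ω₁ • fromBlocks 0 0 (-Eᴴ) 0 = fromBlocks M 0 (ω₁ • -Eᴴ) B := by
    simp [fromBlocks_smul, fromBlocks_add]
  have hU : fromBlocks M 0 0 B + ω₂ • fromBlocks 0 E 0 0 = fromBlocks M (ω₂ • E) 0 B := by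
    simp [fromBlocks_smul, fromBlocks_add]
  have hBc : IsUnit (fromBlocks M 0 0 B).det := by rw [det_fromBlocks_zero₂₁]; exact hM.mul hB
  rw [hL, hU, det_mul, det_mul, det_fromBlocks_zero₁₂, det_fromBlocks_zero₂₁]
  exact ((hM.mul hB).mul (isUnit_nonsing_inv_det _ hBc)).mul (hM.mul hB)

section PosDef

variable [PartialOrder R] [StarRing R]

theorem PosDef.eq_zero_of_dotProduct_mulVec_self_eq_zero {M : Matrix n n R} (hM : M.PosDef)
    {u : n → R} (h : star u ⬝ᵥ M *ᵥ u = 0) : u = 0 := by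
  by_contra hu
  exact (hM.dotProduct_mulVec_pos hu).ne' h

theorem eq_zero_and_mulVec_eq_zero_of_fromBlocks_mulVec_eq_zero {M : Matrix m m R}
    (hM : M.PosDef) {E : Matrix m n R} {u : m → R} {v : n → R}
    (h : fromBlocks M E (-Eᴴ) 0 *ᵥ (u ⊕ᵥ v) = 0) : u = 0 ∧ E *ᵥ v = 0 := by
  have h₁ : M *ᵥ u + E *ᵥ v = 0 := by simpa [fromBlocks_mulVec] using congrArg (· ∘ Sum.inl) h
  have h₂ : star u ᵥ* E = 0 := by
    simpa [fromBlocks_mulVec, star_mulVec, vecMul_neg] using congrArg (star <| · ∘ Sum.inr) h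
  have hu : u = 0 := hM.eq_zero_of_dotProduct_mulVec_self_eq_zero <| by
    rw [eq_neg_of_add_eq_zero_left h₁, dotProduct_neg, dotProduct_mulVec, h₂, zero_dotProduct,
      neg_zero]
  exact ⟨hu, by simpa [hu] using h₁⟩

theorem eq_zero_of_saddle_preconditioner_mulVec_eq [DecidableEq m] [DecidableEq n]
    {M : Matrix m m R} {B : Matrix n n R} (hM : M.PosDef) (hB : B.PosDef)
    (hBc : IsUnit (fromBlocks M 0 0 B).det) {E : Matrix m n R} {ω₁ ω₂ : R} {x y : m ⊕ n → R}
    (hAy : fromBlocks M E (-Eᴴ) 0 *ᵥ y = 0)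
    (hPy : ((fromBlocks M 0 0 B + ω₁ • fromBlocks 0 0 (-Eᴴ) 0) * (fromBlocks M 0 0 B)⁻¹ *
      (fromBlocks M 0 0 B + ω₂ • fromBlocks 0 E 0 0)) *ᵥ y = fromBlocks M E (-Eᴴ) 0 *ᵥ x) :
    y = 0 := by
  obtain ⟨u, v, rfl⟩ : ∃ u v, y = u ⊕ᵥ v := ⟨_, _, (Sum.elim_comp_inl_inr y).symm⟩
  obtain ⟨rfl, hEv⟩ := eq_zero_and_mulVec_eq_zero_of_fromBlocks_mulVec_eq_zero hM hAy
  have hBcy : fromBlocks M 0 0 B *ᵥ (0 ⊕ᵥ v) = fromBlocks M E (-Eᴴ) 0 *ᵥ x := by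
    rw [← hPy, mul_nonsing_inv_mul_mulVec_eq hBc] <;>
      simp [smul_mulVec, fromBlocks_mulVec, hEv]
  have hv : star v ⬝ᵥ B *ᵥ v = 0 := calc
    star v ⬝ᵥ B *ᵥ v = star (0 ⊕ᵥ v) ⬝ᵥ fromBlocks M 0 0 B *ᵥ (0 ⊕ᵥ v) := by
      simp [fromBlocks_mulVec, Function.star_sumElim]
    _ = star ((fromBlocks M E (-Eᴴ) 0)ᴴ *ᵥ (0 ⊕ᵥ v)) ⬝ᵥ x := by
      rw [hBcy, dotProduct_mulVec, star_mulVec, conjTranspose_conjTranspose]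
    _ = 0 := by simp [fromBlocks_conjTranspose, fromBlocks_mulVec, neg_mulVec, hEv]
  rw [hB.eq_zero_of_dotProduct_mulVec_self_eq_zero hv, Sum.elim_zero_zero]

end PosDef

end Matrix

theorem stmt5_general {p q : ℕ} (M : Matrix (Fin p) (Fin p) ℂ) (hM : M.PosDef)
    (B : Matrix (Fin q) (Fin q) ℂ) (hB : B.PosDef)
    (E : Matrix (Fin p) (Fin q) ℂ) (ω₁ ω₂ : ℂ) :
    let A : Matrix (Fin p ⊕ Fin q) (Fin p ⊕ Fin q) ℂ := fromBlocks M E (-Eᴴ) 0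
    let Bc : Matrix (Fin p ⊕ Fin q) (Fin p ⊕ Fin q) ℂ := fromBlocks M 0 0 B
    let KL : Matrix (Fin p ⊕ Fin q) (Fin p ⊕ Fin q) ℂ := fromBlocks 0 0 (-Eᴴ) 0
    let KU : Matrix (Fin p ⊕ Fin q) (Fin p ⊕ Fin q) ℂ := fromBlocks 0 E 0 0
    let Bw : Matrix (Fin p ⊕ Fin q) (Fin p ⊕ Fin q) ℂ :=
      (Bc + ω₁ • KL) * Bc⁻¹ * (Bc + ω₂ • KU)
    {x : Fin p ⊕ Fin q → ℂ | ((Bw⁻¹ * A) * (Bw⁻¹ * A)).mulVec x = 0} =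
      {x : Fin p ⊕ Fin q → ℂ | (Bw⁻¹ * A).mulVec x = 0} := by
  intro A Bc KL KU Bw
  have hMdet : IsUnit M.det := (isUnit_iff_isUnit_det M).mp hM.isUnit
  have hBdet : IsUnit B.det := (isUnit_iff_isUnit_det B).mp hB.isUnit
  have hBc : IsUnit Bc.det := by
    rw [det_fromBlocks_zero₂₁]
    exact hMdet.mul hBdet
  exact setOf_mulVec_nonsing_inv_mul_sq_eq_zero_eq
    (isUnit_det_saddle_preconditioner hMdet hBdet E ω₁ ω₂) fun _ _ hAy hBwy ↦
      eq_zero_of_saddle_preconditioner_mulVec_eq hM hB hBc hAy hBwy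

theorem stmt5 {p q : ℕ} (M : Matrix (Fin p) (Fin p) ℂ) (hM : M.PosDef)
    (B : Matrix (Fin q) (Fin q) ℂ) (hB : B.PosDef)
    (E : Matrix (Fin p) (Fin q) ℂ) (ω₁ ω₂ τ : ℂ) (hτ : τ ≠ 0) :
    let A : Matrix (Fin p ⊕ Fin q) (Fin p ⊕ Fin q) ℂ := fromBlocks M E (-Eᴴ) 0
    let Bc : Matrix (Fin p ⊕ Fin q) (Fin p ⊕ Fin q) ℂ := fromBlocks M 0 0 B
    let KL : Matrix (Fin p ⊕ Fin q) (Fin p ⊕ Fin q) ℂ := fromBlocks 0 0 (-Eᴴ) 0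
    let KU : Matrix (Fin p ⊕ Fin q) (Fin p ⊕ Fin q) ℂ := fromBlocks 0 E 0 0
    let Bw : Matrix (Fin p ⊕ Fin q) (Fin p ⊕ Fin q) ℂ :=
      (Bc + ω₁ • KL) * Bc⁻¹ * (Bc + ω₂ • KU)
    {x : Fin p ⊕ Fin q → ℂ | ((Bw⁻¹ * A) * (Bw⁻¹ * A)).mulVec x = 0} =
      {x : Fin p ⊕ Fin q → ℂ | (Bw⁻¹ * A).mulVec x = 0} :=
  stmt5_general M hM B hB E ω₁ ω₂
end

section
/- Let M ∈ ℂ^{p×p} be Hermitian positive definite, E ∈ ℂ^{p×q}, P ∈ ℂ^{p×p} Hermitian positive definite, B = Eᴴ P⁻¹ E, and let A = [[M, E],[-Eᴴ, 0]]. Define B(ω₁,ω₂) = [[M, ω₂E], [-ω₁Eᴴ, B - ω₁ω₂EᴴM⁻¹E]] and B(ω₁,ω₂)† = [[M⁻¹ - ω₁ω₂M⁻¹EB†EᴴM⁻¹, -ω₂M⁻¹EB†], [ω₁B†EᴴM⁻¹, B†]]. Then B(ω₁,ω₂)·B(ω₁,ω₂)†·A = A. -/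
/-!
Since `M` is invertible, `B(ω₁,ω₂) B(ω₁,ω₂)†` is block lower triangular,
`[[I, 0], [ω₁ (B B† - I) Eᴴ M⁻¹, B B†]]`, so the claim reduces to `B B† Eᴴ = Eᴴ`.
For `N = I - B B†` we have `N B = 0`, hence `(N Eᴴ) P⁻¹ (N Eᴴ)ᴴ = N B Nᴴ = 0`,
and positive definiteness of `P⁻¹` forces `N Eᴴ = 0`.
-/

open Matrix
open scoped ComplexOrder

namespace Matrix

section PosDef

variable {m n R : Type*} [Fintype n] [Ring R] [PartialOrder R] [StarRing R]

theorem PosDef.eq_zero_of_mul_mul_conjTranspose_eq_zero {S : Matrix n n R} (hS : S.PosDef)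
    {Y : Matrix m n R} (h : Y * S * Yᴴ = 0) : Y = 0 := by
  funext i
  have hdiag : star (star (Y i)) ⬝ᵥ (S *ᵥ star (Y i)) = (Y * S * Yᴴ) i i := by
    rw [star_star, dotProduct_mulVec]
    rfl
  rw [h] at hdiag
  by_contra hi
  exact (hS.dotProduct_mulVec_pos (star_ne_zero.mpr hi)).ne' hdiag

theorem PosDef.conjTranspose_mul_mul_same_mul_mul_conjTranspose [Fintype m] {S : Matrix n n R}
    (hS : S.PosDef) {E : Matrix n m R} {G : Matrix m m R}
    (hG : Eᴴ * S * E * G * (Eᴴ * S * E) = Eᴴ * S * E) :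
    Eᴴ * S * E * G * Eᴴ = Eᴴ := by
  classical
  have hNB : (1 - Eᴴ * S * E * G) * (Eᴴ * S * E) = 0 := by
    rw [sub_mul, one_mul, hG, sub_self]
  have hNE : (1 - Eᴴ * S * E * G) * Eᴴ = 0 := by
    refine hS.eq_zero_of_mul_mul_conjTranspose_eq_zero ?_
    calc (1 - Eᴴ * S * E * G) * Eᴴ * S * ((1 - Eᴴ * S * E * G) * Eᴴ)ᴴ
        = (1 - Eᴴ * S * E * G) * (Eᴴ * S * E) * (1 - Eᴴ * S * E * G)ᴴ := by
          simp only [conjTranspose_mul, conjTranspose_conjTranspose, Matrix.mul_assoc]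
      _ = 0 := by rw [hNB, zero_mul]
  rw [Matrix.sub_mul, Matrix.one_mul, sub_eq_zero] at hNE
  exact hNE.symm

end PosDef

section Preconditioner

variable {m n R : Type*} [Fintype m] [Fintype n] [DecidableEq m] [CommRing R]

noncomputable def preconditioner (M : Matrix m m R) (E : Matrix m n R) (F : Matrix n m R)
    (B : Matrix n n R) (ω₁ ω₂ : R) : Matrix (m ⊕ n) (m ⊕ n) R :=
  fromBlocks M (ω₂ • E) (-(ω₁ • F)) (B - (ω₁ * ω₂) • (F * M⁻¹ * E))

noncomputable def preconditionerPinv (M : Matrix m m R) (E : Matrix m n R) (F : Matrix n m R)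
    (G : Matrix n n R) (ω₁ ω₂ : R) : Matrix (m ⊕ n) (m ⊕ n) R :=
  fromBlocks (M⁻¹ - (ω₁ * ω₂) • (M⁻¹ * E * G * F * M⁻¹)) (-(ω₂ • (M⁻¹ * E * G)))
    (ω₁ • (G * F * M⁻¹)) G

theorem preconditioner_mul_preconditionerPinv [DecidableEq n] {M : Matrix m m R}
    (hM : IsUnit M.det) (E : Matrix m n R) (F : Matrix n m R) (B G : Matrix n n R) (ω₁ ω₂ : R) :
    preconditioner M E F B ω₁ ω₂ * preconditionerPinv M E F G ω₁ ω₂ =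
      fromBlocks 1 0 (ω₁ • (B * G * F * M⁻¹ - F * M⁻¹)) (B * G) := by
  have hMM : M * M⁻¹ = 1 := mul_nonsing_inv M hM
  simp only [preconditioner, preconditionerPinv, fromBlocks_multiply]
  congr 1 <;>
    simp only [Matrix.mul_sub, Matrix.sub_mul, Matrix.mul_neg, Matrix.neg_mul, Matrix.mul_smul,
      Matrix.smul_mul, ← Matrix.mul_assoc, hMM, Matrix.one_mul] <;>
    module

theorem preconditioner_mul_preconditionerPinv_mul_saddlePoint [DecidableEq n] {M : Matrix m m R}
    (hM : IsUnit M.det) (E : Matrix m n R) (F : Matrix n m R) (B G : Matrix n n R) (ω₁ ω₂ : R)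
    (hF : B * G * F = F) :
    preconditioner M E F B ω₁ ω₂ * preconditionerPinv M E F G ω₁ ω₂ * fromBlocks M E (-F) 0 =
      fromBlocks M E (-F) 0 := by
  simp [preconditioner_mul_preconditionerPinv hM, fromBlocks_multiply, hF, Matrix.mul_neg]

end Preconditioner

end Matrix

theorem stmt8_general {p q : ℕ} (M P : Matrix (Fin p) (Fin p) ℂ)
    (hM : M.PosDef) (hP : P.PosDef)
    (E : Matrix (Fin p) (Fin q) ℂ) (ω₁ ω₂ : ℂ)
    (B Bd : Matrix (Fin q) (Fin q) ℂ) (hB : B = Eᴴ * P⁻¹ * E)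
    (h1 : B * Bd * B = B) :
    let A : Matrix (Fin p ⊕ Fin q) (Fin p ⊕ Fin q) ℂ := fromBlocks M E (-Eᴴ) 0
    let Bw : Matrix (Fin p ⊕ Fin q) (Fin p ⊕ Fin q) ℂ :=
      fromBlocks M (ω₂ • E) (-(ω₁ • Eᴴ)) (B - (ω₁ * ω₂) • (Eᴴ * M⁻¹ * E))
    let Bwd : Matrix (Fin p ⊕ Fin q) (Fin p ⊕ Fin q) ℂ :=
      fromBlocks (M⁻¹ - (ω₁ * ω₂) • (M⁻¹ * E * Bd * Eᴴ * M⁻¹)) (-(ω₂ • (M⁻¹ * E * Bd)))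
        (ω₁ • (Bd * Eᴴ * M⁻¹)) Bd
    Bw * Bwd * A = A := by
  intro A Bw Bwd
  subst hB
  have hrange : Eᴴ * P⁻¹ * E * Bd * Eᴴ = Eᴴ :=
    hP.inv.conjTranspose_mul_mul_same_mul_mul_conjTranspose h1
  exact preconditioner_mul_preconditionerPinv_mul_saddlePoint
    (M.isUnit_iff_isUnit_det.mp hM.isUnit) E Eᴴ _ Bd ω₁ ω₂ hrange

theorem stmt8 {p q : ℕ} (M P : Matrix (Fin p) (Fin p) ℂ)
    (hM : M.PosDef) (hP : P.PosDef)
    (E : Matrix (Fin p) (Fin q) ℂ) (ω₁ ω₂ : ℂ)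
    (B Bd : Matrix (Fin q) (Fin q) ℂ) (hB : B = Eᴴ * P⁻¹ * E)
    (h1 : B * Bd * B = B) (h2 : Bd * B * Bd = Bd)
    (h3 : (B * Bd)ᴴ = B * Bd) (h4 : (Bd * B)ᴴ = Bd * B) :
    let A : Matrix (Fin p ⊕ Fin q) (Fin p ⊕ Fin q) ℂ := fromBlocks M E (-Eᴴ) 0
    let Bw : Matrix (Fin p ⊕ Fin q) (Fin p ⊕ Fin q) ℂ :=
      fromBlocks M (ω₂ • E) (-(ω₁ • Eᴴ)) (B - (ω₁ * ω₂) • (Eᴴ * M⁻¹ * E))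
    let Bwd : Matrix (Fin p ⊕ Fin q) (Fin p ⊕ Fin q) ℂ :=
      fromBlocks (M⁻¹ - (ω₁ * ω₂) • (M⁻¹ * E * Bd * Eᴴ * M⁻¹)) (-(ω₂ • (M⁻¹ * E * Bd)))
        (ω₁ • (Bd * Eᴴ * M⁻¹)) Bd
    Bw * Bwd * A = A :=
  stmt8_general M P hM hP E ω₁ ω₂ B Bd hB h1
end

section
/- Let E ∈ ℂ^{p×q} with rank r, and let E = U (E_r, 0) Vᴴ be its singular value decomposition with U, V unitary and E_r = (Σ_r; 0) ∈ ℂ^{p×r}, where Σ_r = diag(σ₁,…,σ_r) with σᵢ > 0. Let P ∈ ℂ^{p×p} be Hermitian positive definite and B = EᴴP⁻¹E. Then B = V diag(Σ_r P̂ Σ_r, 0) Vᴴ and B† = V diag((Σ_r P̂ Σ_r)⁻¹, 0) Vᴴ, where P̂ = U₁ᴴ P⁻¹ U₁ with U₁ the first r columns of U. In particular Σ_r P̂ Σ_r is Hermitian positive definite. -/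
open Matrix
open scoped ComplexOrder

/-!
Writing `D = diag(Σ_r, 0)`, the first `r` columns of `U * D` are `U₁ * Σ_r` and the others vanish,
so `B = V * (U D)ᴴ P⁻¹ (U D) * Vᴴ = V * diag(Σ_r P̂ Σ_r, 0) * Vᴴ`. Since `U₁` has orthonormal
columns and `Σ_r` is invertible, both congruences preserve positive definiteness of `P⁻¹`.
The Penrose equations are preserved by padding with zero blocks and by `A ↦ U A Wᴴ`,
`X ↦ W X Uᴴ` for isometries `U`, `W`, and an invertible matrix has its inverse as pseudoinverse.
-/

namespace Matrix

variable {R : Type*} {k l m n m' n' : Type*}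

theorem mulVec_injective_of_mul_eq_one [Semiring R] [Fintype m] [Fintype n] [DecidableEq n]
    {A : Matrix m n R} {B : Matrix n m R} (h : B * A = 1) : Function.Injective A.mulVec :=
  Function.LeftInverse.injective (g := B.mulVec) fun x => by rw [mulVec_mulVec, h, one_mulVec]

theorem toCols₁_conjTranspose_mul_toCols₁ [Semiring R] [StarRing R] [Fintype m] [DecidableEq k]
    [DecidableEq l] {A : Matrix m (k ⊕ l) R} (h : Aᴴ * A = 1) : A.toCols₁ᴴ * A.toCols₁ = 1 := by
  rw [← fromCols_toCols A, conjTranspose_fromCols_eq_fromRows_conjTranspose, fromRows_mul_fromCols,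
    ← fromBlocks_one, fromBlocks_inj] at h
  exact h.1

theorem mul_fromBlocks_zero [Semiring R] [Fintype k] [Fintype l] (A : Matrix m (k ⊕ l) R)
    (X : Matrix k n R) :
    A * (fromBlocks X 0 0 0 : Matrix (k ⊕ l) (n ⊕ n') R) = fromCols (A.toCols₁ * X) 0 := by
  rw [← fromCols_toCols A, fromCols_mul_fromBlocks]
  simp only [Matrix.mul_zero, add_zero, toCols₁_fromCols]

theorem conjTranspose_fromCols_zero_mul_mul [Semiring R] [StarRing R] [Fintype m]
    (Y : Matrix m n R) (Q : Matrix m m R) :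
    (fromCols Y 0)ᴴ * Q * fromCols Y 0 =
      (fromBlocks (Yᴴ * Q * Y) 0 0 0 : Matrix (n ⊕ n') (n ⊕ n') R) := by
  rw [conjTranspose_fromCols_eq_fromRows_conjTranspose, fromRows_mul, fromRows_mul_fromCols]
  simp only [conjTranspose_zero, Matrix.zero_mul, Matrix.mul_zero]

theorem conjTranspose_mul_conjTranspose_mul_mul [Semiring R] [StarRing R] [Fintype m] [Fintype n]
    (X : Matrix m n R) (V : Matrix k n R) (Q : Matrix m m R) :
    (X * Vᴴ)ᴴ * Q * (X * Vᴴ) = V * (Xᴴ * Q * X) * Vᴴ := by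
  simp only [conjTranspose_mul, conjTranspose_conjTranspose, Matrix.mul_assoc]

def IsMoorePenroseInverse [Fintype m] [Fintype n] [Mul R] [AddCommMonoid R] [Star R]
    (A : Matrix m n R) (X : Matrix n m R) : Prop :=
  A * X * A = A ∧ X * A * X = X ∧ (A * X)ᴴ = A * X ∧ (X * A)ᴴ = X * A

section CommRing

variable [CommRing R] [StarRing R]

theorem isMoorePenroseInverse_nonsing_inv [Fintype n] [DecidableEq n] {A : Matrix n n R}
    (hA : IsUnit A.det) : IsMoorePenroseInverse A A⁻¹ := by
  simp only [IsMoorePenroseInverse, mul_nonsing_inv A hA, nonsing_inv_mul A hA, Matrix.one_mul,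
    conjTranspose_one, and_self]

theorem IsMoorePenroseInverse.fromBlocks_zero [Fintype m] [Fintype n] [Fintype m'] [Fintype n']
    {A : Matrix m n R} {X : Matrix n m R} (h : IsMoorePenroseInverse A X) :
    IsMoorePenroseInverse (fromBlocks A 0 0 0 : Matrix (m ⊕ m') (n ⊕ n') R)
      (fromBlocks X 0 0 0) := by
  obtain ⟨h₁, h₂, h₃, h₄⟩ := h
  simp only [IsMoorePenroseInverse, fromBlocks_multiply, fromBlocks_conjTranspose,
    Matrix.mul_zero, Matrix.zero_mul, add_zero, conjTranspose_zero, h₁, h₂, h₃, h₄, and_self]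

theorem conjTranspose_mul_mul_conjTranspose [Fintype m] [Fintype n] (U : Matrix k m R)
    (A : Matrix m n R) (W : Matrix l n R) : (U * A * Wᴴ)ᴴ = W * Aᴴ * Uᴴ := by
  simp only [conjTranspose_mul, conjTranspose_conjTranspose, Matrix.mul_assoc]

theorem mul_mul_conjTranspose_mul_mul_mul_conjTranspose [Fintype l] [Fintype m] [Fintype n]
    [Fintype m'] [DecidableEq n] {W : Matrix l n R} (hW : Wᴴ * W = 1) (U : Matrix k m R)
    (A : Matrix m n R) (X : Matrix n m' R) (V : Matrix n' m' R) :
    U * A * Wᴴ * (W * X * Vᴴ) = U * (A * X) * Vᴴ := by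
  simp only [Matrix.mul_assoc, ← Matrix.mul_assoc Wᴴ W, hW, Matrix.one_mul]

theorem IsMoorePenroseInverse.conj [Fintype k] [Fintype l] [Fintype m] [Fintype n]
    [DecidableEq m] [DecidableEq n] {A : Matrix m n R} {X : Matrix n m R} {U : Matrix k m R}
    {W : Matrix l n R} (h : IsMoorePenroseInverse A X) (hU : Uᴴ * U = 1) (hW : Wᴴ * W = 1) :
    IsMoorePenroseInverse (U * A * Wᴴ) (W * X * Uᴴ) := by
  obtain ⟨h₁, h₂, h₃, h₄⟩ := h
  refine ⟨?_, ?_, ?_, ?_⟩ <;>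
    simp only [mul_mul_conjTranspose_mul_mul_mul_conjTranspose hU,
      mul_mul_conjTranspose_mul_mul_mul_conjTranspose hW, conjTranspose_mul_mul_conjTranspose,
      h₁, h₂, h₃, h₄]

end CommRing

end Matrix

theorem stmt11_general {r s t : ℕ}
    (U : Matrix (Fin r ⊕ Fin t) (Fin r ⊕ Fin t) ℂ)
    (hU : Uᴴ * U = 1)
    (V : Matrix (Fin r ⊕ Fin s) (Fin r ⊕ Fin s) ℂ)
    (hV : Vᴴ * V = 1)
    (σ : Fin r → ℝ) (hσ : ∀ i, 0 < σ i)
    (E : Matrix (Fin r ⊕ Fin t) (Fin r ⊕ Fin s) ℂ)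
    (hE : E = U * (fromBlocks (diagonal fun i => (σ i : ℂ)) 0 0 0 :
      Matrix (Fin r ⊕ Fin t) (Fin r ⊕ Fin s) ℂ) * Vᴴ)
    (P : Matrix (Fin r ⊕ Fin t) (Fin r ⊕ Fin t) ℂ) (hP : P.PosDef)
    (B : Matrix (Fin r ⊕ Fin s) (Fin r ⊕ Fin s) ℂ) (hB : B = Eᴴ * P⁻¹ * E) :
    let Sr : Matrix (Fin r) (Fin r) ℂ := diagonal fun i => (σ i : ℂ)
    let U₁ : Matrix (Fin r ⊕ Fin t) (Fin r) ℂ := U.submatrix id Sum.inl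
    let Phat : Matrix (Fin r) (Fin r) ℂ := U₁ᴴ * P⁻¹ * U₁
    let S : Matrix (Fin r) (Fin r) ℂ := Sr * Phat * Sr
    let Bd : Matrix (Fin r ⊕ Fin s) (Fin r ⊕ Fin s) ℂ := V * fromBlocks S⁻¹ 0 0 0 * Vᴴ
    B = V * fromBlocks S 0 0 0 * Vᴴ ∧
    S.PosDef ∧
    (B * Bd * B = B ∧ Bd * B * Bd = Bd ∧ (B * Bd)ᴴ = B * Bd ∧ (Bd * B)ᴴ = Bd * B) := by
  intro Sr U₁ Phat S Bd
  have hSr : Sr.PosDef := posDef_diagonal_iff.2 fun i => Complex.zero_lt_real.2 (hσ i)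
  have hU₁ : U₁ᴴ * U₁ = 1 := toCols₁_conjTranspose_mul_toCols₁ hU
  have hS : S.PosDef := by
    have hPhat : Phat.PosDef :=
      hP.inv.conjTranspose_mul_mul_same (mulVec_injective_of_mul_eq_one hU₁)
    simpa only [hSr.isHermitian.eq] using
      hPhat.conjTranspose_mul_mul_same (mulVec_injective_of_isUnit hSr.isUnit)
  have hBS : B = V * fromBlocks S 0 0 0 * Vᴴ := by
    rw [hB, hE, mul_fromBlocks_zero, conjTranspose_mul_conjTranspose_mul_mul,
      conjTranspose_fromCols_zero_mul_mul, conjTranspose_mul, hSr.isHermitian.eq]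
    simp only [S, Phat, Matrix.mul_assoc]
    rfl -- `U.toCols₁` unfolds to `U₁`
  have hS_inv : IsMoorePenroseInverse S S⁻¹ :=
    isMoorePenroseInverse_nonsing_inv ((isUnit_iff_isUnit_det S).1 hS.isUnit)
  have hBd : IsMoorePenroseInverse B Bd := hBS ▸ hS_inv.fromBlocks_zero.conj hV hV
  exact ⟨hBS, hS, hBd⟩

theorem stmt11 {r s t : ℕ}
    (U : Matrix (Fin r ⊕ Fin t) (Fin r ⊕ Fin t) ℂ)
    (hU : Uᴴ * U = 1) (hU' : U * Uᴴ = 1)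
    (V : Matrix (Fin r ⊕ Fin s) (Fin r ⊕ Fin s) ℂ)
    (hV : Vᴴ * V = 1) (hV' : V * Vᴴ = 1)
    (σ : Fin r → ℝ) (hσ : ∀ i, 0 < σ i)
    (E : Matrix (Fin r ⊕ Fin t) (Fin r ⊕ Fin s) ℂ)
    (hE : E = U * (fromBlocks (diagonal fun i => (σ i : ℂ)) 0 0 0 :
      Matrix (Fin r ⊕ Fin t) (Fin r ⊕ Fin s) ℂ) * Vᴴ)
    (hrank : E.rank = r)
    (P : Matrix (Fin r ⊕ Fin t) (Fin r ⊕ Fin t) ℂ) (hP : P.PosDef)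
    (B : Matrix (Fin r ⊕ Fin s) (Fin r ⊕ Fin s) ℂ) (hB : B = Eᴴ * P⁻¹ * E) :
    let Sr : Matrix (Fin r) (Fin r) ℂ := diagonal fun i => (σ i : ℂ)
    let U₁ : Matrix (Fin r ⊕ Fin t) (Fin r) ℂ := U.submatrix id Sum.inl
    let Phat : Matrix (Fin r) (Fin r) ℂ := U₁ᴴ * P⁻¹ * U₁
    let S : Matrix (Fin r) (Fin r) ℂ := Sr * Phat * Sr
    let Bd : Matrix (Fin r ⊕ Fin s) (Fin r ⊕ Fin s) ℂ := V * fromBlocks S⁻¹ 0 0 0 * Vᴴ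
    B = V * fromBlocks S 0 0 0 * Vᴴ ∧
    S.PosDef ∧
    (B * Bd * B = B ∧ Bd * B * Bd = Bd ∧ (B * Bd)ᴴ = B * Bd ∧ (Bd * B)ᴴ = Bd * B) :=
  stmt11_general U hU V hV σ hσ E hE P hP B hB
end
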